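/- Burge transform: for integers L, M, a, b with a, b >= 0 (or both a, b <= 0), the sum over i >= 0 of q^{i^2} [2L+M-i choose 2L]_q B(L-i, i, a, b) equals q^{b^2} B(L, M, a+b, b). -/
import Mathlib


open Polynomial

noncomputable def qb : ℕ → ℕ → Polynomial ℤ
  | _, 0 => 1
  | 0, _ + 1 => 0
  | n + 1, m + 1 => qb n m + X ^ (m + 1) * qb n (m + 1)

/-- The Gaussian binomial coefficient with integer arguments, zero unless `0 ≤ m ≤ n`. -/
noncomputable def qbz (n m : ℤ) : Polynomial ℤ :=
  if 0 ≤ m ∧ m ≤ n then qb n.toNat m.toNat else 0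

/-- `B(L,M,a,b) = [L+M+a-b; L+a]_q [L+M-a+b; L-a]_q`. -/
noncomputable def Bp (L M a b : ℤ) : Polynomial ℤ :=
  qbz (L + M + a - b) (L + a) * qbz (L + M - a + b) (L - a)

set_option linter.unusedVariables false

lemma qb_zero_right (n : ℕ) : qb n 0 = 1 := by cases n <;> rfl
lemma qb_pascal (n m : ℕ) : qb (n+1) (m+1) = qb n m + X ^ (m + 1) * qb n (m + 1) := rfl

lemma qb_eq_zero : ∀ {n m : ℕ}, n < m → qb n m = 0 := by
  intro n
  induction n with
  | zero => intro m h; match m, h with | (m+1), _ => rfl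
  | succ n ih =>
    intro m h
    match m, h with
    | (m+1), h =>
      rw [qb_pascal, ih (by omega), ih (by omega)]
      simp

lemma qb_self : ∀ n : ℕ, qb n n = 1 := by
  intro n
  induction n with
  | zero => rfl
  | succ n ih => rw [qb_pascal, ih, qb_eq_zero (by omega)]; simp

lemma qbA : ∀ n : ℕ, (∀ k, 1 ≤ k → k ≤ n → (1 - X^k) * qb n k = (1 - X^n) * qb (n-1) (k-1)) ∧
    (∀ k, k ≤ n → (1 - X^(n-k)) * qb n k = (1 - X^n) * qb (n-1) k) := by
  intro n
  induction n with
  | zero =>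
    constructor
    · intro k h1 h2; omega
    · intro k hk
      interval_cases k
      simp
  | succ n ih =>
    obtain ⟨ih1, ih2⟩ := ih
    constructor
    · rintro k h1 h2
      obtain ⟨k', rfl⟩ : ∃ k', k = k'+1 := ⟨k-1, by omega⟩
      simp only [Nat.add_sub_cancel]
      rcases Nat.lt_or_ge k' n with hk | hk
      · have h3 := ih1 (k'+1) (by omega) (by omega)
        simp only [Nat.add_sub_cancel] at h3
        have h4 := ih2 k' (by omega)
        rw [qb_pascal, show n+1 = (k'+1)+(n-k') by omega, pow_add]
        linear_combination X^(k'+1) * h3 - X^(k'+1) * h4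
      · have hkn : k' = n := by omega
        subst hkn
        rw [qb_self, qb_self]
    · rintro k hk
      match k with
      | 0 => simp [qb_zero_right]
      | (k'+1) =>
        rcases Nat.lt_or_ge k' n with hkn | hkn
        · have h3 := ih1 (k'+1) (by omega) (by omega)
          simp only [Nat.add_sub_cancel] at h3
          have h4 := ih2 k' (by omega)
          simp only [Nat.succ_sub_succ, Nat.sub_zero]
          rw [qb_pascal, show n+1 = (k'+1)+(n-k') by omega, pow_add]
          linear_combination h4 - h3
        · have : k' = n := by omega
          subst this
          simp [Nat.add_sub_cancel, Nat.sub_self, qb_eq_zero (Nat.lt_succ_self k')]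

lemma qbz_eq_zero {n m : ℤ} (h : ¬(0 ≤ m ∧ m ≤ n)) : qbz n m = 0 := by
  simp [qbz, h]

lemma qbz_eq_qb {n m : ℤ} (h0 : 0 ≤ m) (h1 : m ≤ n) : qbz n m = qb n.toNat m.toNat := by
  simp [qbz, h0, h1]

lemma qbz_self {n : ℤ} (h : 0 ≤ n) : qbz n n = 1 := by
  rw [qbz_eq_qb h le_rfl]
  exact qb_self _

lemma B1 (n k : ℤ) (h1 : 1 ≤ k) (h2 : k ≤ n) :
    (1 - X^(k.toNat)) * qbz n k = (1 - X^(n.toNat)) * qbz (n-1) (k-1) := by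
  rw [qbz_eq_qb (by omega) h2, qbz_eq_qb (by omega) (by omega)]
  have e1 : (n-1).toNat = n.toNat - 1 := by omega
  have e2 : (k-1).toNat = k.toNat - 1 := by omega
  rw [e1, e2]
  exact (qbA n.toNat).1 k.toNat (by omega) (by omega)

lemma B2 (n k : ℤ) (h0 : 0 ≤ k) (h2 : k ≤ n) (h1 : 1 ≤ n) :
    (1 - X^((n-k).toNat)) * qbz n k = (1 - X^(n.toNat)) * qbz (n-1) k := by
  rcases eq_or_lt_of_le h2 with rfl|hlt
  · rw [qbz_eq_zero (show ¬(0 ≤ k ∧ k ≤ k-1) by omega), show (k-k).toNat = 0 by omega]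
    simp
  rw [qbz_eq_qb h0 h2, qbz_eq_qb h0 (by omega)]
  have e1 : (n-1).toNat = n.toNat - 1 := by omega
  have e2 : (n-k).toNat = n.toNat - k.toNat := by omega
  rw [e1, e2]
  exact (qbA n.toNat).2 k.toNat (by omega)

lemma RRz (n k : ℤ) (h0 : 0 ≤ k) (h2 : k ≤ n+1) :
    (1 - X^(k.toNat)) * qbz n k = (1 - X^((n-k+1).toNat)) * qbz n (k-1) := by
  rcases eq_or_lt_of_le h0 with h|h
  · rw [← h]
    simp [qbz_eq_zero (show ¬((0:ℤ) ≤ -1 ∧ (-1:ℤ) ≤ n) by omega)]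
  rcases eq_or_lt_of_le h2 with h'|h'
  · rw [h', qbz_eq_zero (show ¬(0 ≤ n+1 ∧ n+1 ≤ n) by omega),
      show (n-(n+1)+1).toNat = 0 by omega]
    simp
  · have hb1 := B1 n k (by omega) (by omega)
    have hb2 := B2 n (k-1) (by omega) (by omega) (by omega)
    rw [show (n-(k-1)).toNat = (n-k+1).toNat by omega] at hb2
    rw [hb1, ← hb2]

lemma one_sub_X_pow_ne {d : ℕ} (hd : d ≠ 0) : (1 - X^d : Polynomial ℤ) ≠ 0 := by
  intro h
  have := congrArg (fun p => Polynomial.coeff p d) h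
  simp [Polynomial.coeff_one, hd] at this

noncomputable def Gg (L M a b j : ℤ) : Polynomial ℤ :=
  -(X^((j*j-j+M).toNat) * ((1 - X^((j-b).toNat)) * ((1 - X^((L-a+1-j).toNat)) *
    (qbz (2*L+M-j) (2*L) * (qbz (L+a-b) (L+a-j) * qbz (L-a+b) (L-a+1-j))))))

lemma cert (L M a b j : ℤ) (ha : 0 ≤ a) (hb : 0 ≤ b) (hL : a+b ≤ L) (hM : b+1 ≤ M)
    (hj : 0 ≤ j) :
    (1 - X^((M-b).toNat)) * (1 - X^((M+b).toNat)) *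
      (X^((j*j).toNat) * (qbz (2*L+M-j) (2*L) * (qbz (L+a-b) (L+a-j) * qbz (L-a+b) (L-a-j))))
    - (1 - X^((L+M+a).toNat)) * (1 - X^((L+M-a).toNat)) *
      (X^((j*j).toNat) * (qbz (2*L+M-1-j) (2*L) * (qbz (L+a-b) (L+a-j) * qbz (L-a+b) (L-a-j))))
    = Gg L M a b (j+1) - Gg L M a b j := by
  have e0 : Gg L M a b (j+1) =
      -(X^((j*j+j+M).toNat) * ((1 - X^((j+1-b).toNat)) * ((1 - X^((L-a-j).toNat)) *
        (qbz (2*L+M-1-j) (2*L) * (qbz (L+a-b) (L+a-1-j) * qbz (L-a+b) (L-a-j)))))) := by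
    unfold Gg
    rw [show (j+1)*(j+1)-(j+1)+M = j*j+j+M by ring, show 2*L+M-(j+1) = 2*L+M-1-j by ring,
        show L+a-(j+1) = L+a-1-j by ring, show L-a+1-(j+1) = L-a-j by ring]
  rw [e0]
  unfold Gg
  rcases lt_or_ge j b with hc1 | hc1
  · rw [qbz_eq_zero (show ¬(0 ≤ L+a-j ∧ L+a-j ≤ L+a-b) by omega),
        show (j-b).toNat = 0 by omega, show (j+1-b).toNat = 0 by omega]
    ring
  rcases lt_or_ge (L-a) j with hc2 | hc2
  · rw [qbz_eq_zero (show ¬(0 ≤ L-a-j ∧ L-a-j ≤ L-a+b) by omega),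
        show (L-a+1-j).toNat = 0 by omega]
    ring
  rcases lt_or_ge M j with hc3 | hc3
  · rw [qbz_eq_zero (show ¬(0 ≤ 2*L ∧ 2*L ≤ 2*L+M-j) by omega),
        qbz_eq_zero (show ¬(0 ≤ 2*L ∧ 2*L ≤ 2*L+M-1-j) by omega)]
    ring
  rcases eq_or_lt_of_le hc3 with hc4 | hc4
  · -- j = M
    rw [qbz_eq_zero (show ¬(0 ≤ 2*L ∧ 2*L ≤ 2*L+M-1-j) by omega)]
    have hq := RRz (L-a+b) (L-a+1-j) (by omega) (by omega)
    rw [show L-a+b-(L-a+1-j)+1 = j+b by ring, show L-a+1-j-1 = L-a-j by ring] at hq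
    rw [show (M+b).toNat = (j+b).toNat by omega, show (M-b).toNat = (j-b).toNat by omega,
        show (j*j-j+M).toNat = (j*j).toNat by omega]
    linear_combination (-((1 - X^((j-b).toNat)) * (X^((j*j).toNat) *
      (qbz (2*L+M-j) (2*L) * qbz (L+a-b) (L+a-j))))) * hq
  · -- generic region
    obtain ⟨na, hna⟩ : ∃ n:ℕ, a = (n:ℤ) := ⟨a.toNat, by omega⟩
    obtain ⟨nb, hnb⟩ : ∃ n:ℕ, b = (n:ℤ) := ⟨b.toNat, by omega⟩
    obtain ⟨nc, hnc⟩ : ∃ n:ℕ, j = (nb:ℤ) + n := ⟨(j-nb).toNat, by omega⟩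
    obtain ⟨nd, hnd⟩ : ∃ n:ℕ, M = j + 1 + n := ⟨(M-j-1).toNat, by omega⟩
    obtain ⟨ne', hne⟩ : ∃ n:ℕ, L = a + j + n := ⟨(L-a-j).toNat, by omega⟩
    have hT := B2 (2*L+M-j) (2*L) (by omega) (by omega) (by omega)
    rw [show 2*L+M-j-2*L = M-j by ring, show 2*L+M-j-1 = 2*L+M-1-j by ring,
        show (M-j).toNat = nd+1 by omega,
        show (2*L+M-j).toNat = 2*na+2*nb+2*nc+nd+2*ne'+1 by omega] at hT
    have hP := RRz (L+a-b) (L+a-j) (by omega) (by omega)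
    rw [show L+a-b-(L+a-j)+1 = j-b+1 by ring, show L+a-j-1 = L+a-1-j by ring,
        show (L+a-j).toNat = 2*na+ne' by omega,
        show (j-b+1).toNat = nc+1 by omega] at hP
    have hQ := RRz (L-a+b) (L-a+1-j) (by omega) (by omega)
    rw [show L-a+b-(L-a+1-j)+1 = j+b by ring, show L-a+1-j-1 = L-a-j by ring,
        show (L-a+1-j).toNat = ne'+1 by omega,
        show (j+b).toNat = 2*nb+nc by omega] at hQ
    have hjj : (j*j).toNat = (nb+nc)*(nb+nc) := by
      rw [show j*j = (((nb+nc)*(nb+nc) : ℕ) : ℤ) by rw [hnc]; push_cast; ring, Int.toNat_natCast]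
    have hjj1 : (j*j+j+M).toNat = (nb+nc+1)*(nb+nc+1)+nd := by
      rw [show j*j+j+M = (((nb+nc+1)*(nb+nc+1)+nd : ℕ) : ℤ) by rw [hnd, hnc]; push_cast; ring,
        Int.toNat_natCast]
    have hjj2 : (j*j-j+M).toNat = (nb+nc)*(nb+nc)+nd+1 := by
      rw [show j*j-j+M = (((nb+nc)*(nb+nc)+nd+1 : ℕ) : ℤ) by rw [hnd, hnc]; push_cast; ring,
        Int.toNat_natCast]
    rw [hjj, hjj1, hjj2,
        show (M-b).toNat = nc+nd+1 by omega,
        show (M+b).toNat = 2*nb+nc+nd+1 by omega,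
        show (L+M+a).toNat = 2*na+2*nb+2*nc+nd+ne'+1 by omega,
        show (L+M-a).toNat = 2*nb+2*nc+nd+ne'+1 by omega,
        show (j+1-b).toNat = nc+1 by omega,
        show (L-a-j).toNat = ne' by omega,
        show (j-b).toNat = nc by omega,
        show (L-a+1-j).toNat = ne'+1 by omega]
    have hTQ : ((1-X^(nd+1)) * qbz (2*L+M-j) (2*L)) * ((1 - X^(ne'+1)) * qbz (L-a+b) (L-a+1-j))
        = ((1 - X^(2*na+2*nb+2*nc+nd+2*ne'+1)) * qbz (2*L+M-1-j) (2*L)) *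
          ((1 - X^(2*nb+nc)) * qbz (L-a+b) (L-a-j)) := by rw [hT, hQ]
    apply mul_left_cancel₀ (a := (1-X^(nd+1)) * (1-X^(nc+1)) * (1-X^(ne'+1)))
      (mul_ne_zero (mul_ne_zero (one_sub_X_pow_ne (by omega)) (one_sub_X_pow_ne (by omega)))
        (one_sub_X_pow_ne (by omega)))
    linear_combination
      ((1 - X^(nc+nd+1)) * (1 - X^(2*nb+nc+nd+1)) * X^((nb+nc)*(nb+nc)) * (1 - X^(nc+1))
        * (1 - X^(ne'+1)) * (qbz (L+a-b) (L+a-j) * qbz (L-a+b) (L-a-j))) * hT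
      - (X^((nb+nc+1)*(nb+nc+1)+nd) * (1 - X^(nc+1)) * (1 - X^ne') * (1-X^(nd+1)) * (1-X^(ne'+1))
        * (qbz (2*L+M-1-j) (2*L) * qbz (L-a+b) (L-a-j))) * hP
      - (X^((nb+nc)*(nb+nc)+nd+1) * (1 - X^nc) * (1 - X^(ne'+1)) * (1 - X^(nc+1))
        * qbz (L+a-b) (L+a-j)) * hTQ

noncomputable def Fm (L M a b : ℤ) (i : ℕ) : Polynomial ℤ :=
  X ^ (i ^ 2) * qbz (2 * L + M - i) (2 * L) * Bp (L - i) i a b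

noncomputable def Ssum (L M a b : ℤ) : Polynomial ℤ := ∑ᶠ i : ℕ, Fm L M a b i

noncomputable def Rr (L M a b : ℤ) : Polynomial ℤ := X ^ (b^2).toNat * Bp L M (a+b) b

lemma Fm_eq (L M a b : ℤ) (i : ℕ) :
    Fm L M a b i = X^(((i:ℤ)*(i:ℤ)).toNat) *
      (qbz (2*L+M-(i:ℤ)) (2*L) * (qbz (L+a-b) (L+a-(i:ℤ)) * qbz (L-a+b) (L-a-(i:ℤ)))) := by
  unfold Fm Bp
  rw [show ((i:ℤ)*(i:ℤ)).toNat = i^2 by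
        rw [show (i:ℤ)*(i:ℤ) = ((i^2 : ℕ):ℤ) by push_cast; ring, Int.toNat_natCast],
      show L-(i:ℤ)+(i:ℤ)+a-b = L+a-b by ring, show L-(i:ℤ)+a = L+a-(i:ℤ) by ring,
      show L-(i:ℤ)+(i:ℤ)-a+b = L-a+b by ring, show L-(i:ℤ)-a = L-a-(i:ℤ) by ring]
  ring

lemma Fm_eq' (L M a b : ℤ) (i : ℕ) :
    Fm L (M-1) a b i = X^(((i:ℤ)*(i:ℤ)).toNat) *
      (qbz (2*L+M-1-(i:ℤ)) (2*L) * (qbz (L+a-b) (L+a-(i:ℤ)) * qbz (L-a+b) (L-a-(i:ℤ)))) := by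
  rw [Fm_eq, show 2*L+(M-1)-(i:ℤ) = 2*L+M-1-(i:ℤ) by ring]

lemma Fm_zero_top (L M a b : ℤ) (i : ℕ) (h : M < (i:ℤ)) : Fm L M a b i = 0 := by
  unfold Fm
  rw [qbz_eq_zero (show ¬(0 ≤ 2*L ∧ 2*L ≤ 2*L+M-(i:ℤ)) by omega)]
  ring

lemma Fm_zero_P (L M a b : ℤ) (i : ℕ) (h : (i:ℤ) < b) : Fm L M a b i = 0 := by
  unfold Fm Bp
  rw [qbz_eq_zero (show ¬(0 ≤ L-(i:ℤ)+a ∧ L-(i:ℤ)+a ≤ L-(i:ℤ)+(i:ℤ)+a-b) by omega)]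
  ring

lemma Fm_zero_Q (L M a b : ℤ) (i : ℕ) (h : L - a < (i:ℤ)) : Fm L M a b i = 0 := by
  unfold Fm Bp
  rw [qbz_eq_zero (show ¬(0 ≤ L-(i:ℤ)-a ∧ L-(i:ℤ)-a ≤ L-(i:ℤ)+(i:ℤ)-a+b) by omega)]
  ring

lemma Ssum_eq (L M a b : ℤ) (N : ℕ) (hN : M < (N:ℤ)) :
    Ssum L M a b = ∑ i ∈ Finset.range N, Fm L M a b i := by
  apply finsum_eq_finset_sum_of_support_subset
  intro i hi
  simp only [Function.mem_support] at hi
  simp only [Finset.coe_range, Set.mem_Iio]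
  by_contra hcon
  exact hi (Fm_zero_top L M a b i (by omega))

lemma step (L M a b : ℤ) (ha : 0 ≤ a) (hb : 0 ≤ b) (hL : a+b ≤ L) (hM : b+1 ≤ M) :
    (1 - X^((M-b).toNat)) * (1 - X^((M+b).toNat)) * Ssum L M a b
    = (1 - X^((L+M+a).toNat)) * (1 - X^((L+M-a).toNat)) * Ssum L (M-1) a b := by
  have hMnn : 0 ≤ M := by omega
  rw [Ssum_eq L M a b (M.toNat+1) (by omega), Ssum_eq L (M-1) a b (M.toNat+1) (by omega),
      Finset.mul_sum, Finset.mul_sum]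
  have key : ∀ i ∈ Finset.range (M.toNat+1),
      (1 - X^((M-b).toNat)) * (1 - X^((M+b).toNat)) * Fm L M a b i
      = (1 - X^((L+M+a).toNat)) * (1 - X^((L+M-a).toNat)) * Fm L (M-1) a b i
        + (Gg L M a b ((i:ℤ)+1) - Gg L M a b (i:ℤ)) := by
    intro i _
    rw [Fm_eq, Fm_eq']
    linear_combination cert L M a b (i:ℤ) ha hb hL hM (Int.natCast_nonneg i)
  rw [Finset.sum_congr rfl key, Finset.sum_add_distrib]
  have tel : (∑ i ∈ Finset.range (M.toNat+1), (Gg L M a b ((i:ℤ)+1) - Gg L M a b (i:ℤ)))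
      = Gg L M a b ((M.toNat+1 : ℕ):ℤ) - Gg L M a b ((0:ℕ):ℤ) := by
    have h := Finset.sum_range_sub (f := fun i : ℕ => Gg L M a b (i:ℤ)) (M.toNat+1)
    push_cast at h ⊢
    exact h
  rw [tel]
  have g0 : Gg L M a b ((0:ℕ):ℤ) = 0 := by
    unfold Gg
    rw [show (((0:ℕ):ℤ)-b).toNat = 0 by omega]
    simp
  have gN : Gg L M a b ((M.toNat+1 : ℕ):ℤ) = 0 := by
    unfold Gg
    rw [qbz_eq_zero (show ¬(0 ≤ 2*L ∧ 2*L ≤ 2*L+M-((M.toNat+1 : ℕ):ℤ)) by omega)]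
    simp
  rw [g0, gN]
  ring

lemma Rstep (L M a b : ℤ) (ha : 0 ≤ a) (hb : 0 ≤ b) (hL : a+b ≤ L) (hM : b+1 ≤ M) :
    (1 - X^((M-b).toNat)) * (1 - X^((M+b).toNat)) * Rr L M a b
    = (1 - X^((L+M+a).toNat)) * (1 - X^((L+M-a).toNat)) * Rr L (M-1) a b := by
  unfold Rr Bp
  rw [show L+M+(a+b)-b = L+M+a by ring, show L+M-(a+b)+b = L+M-a by ring,
      show L+(M-1)+(a+b)-b = L+M+a-1 by ring, show L+(M-1)-(a+b)+b = L+M-a-1 by ring]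
  have h1 := B2 (L+M+a) (L+(a+b)) (by omega) (by omega) (by omega)
  rw [show L+M+a-(L+(a+b)) = M-b by ring] at h1
  have h2 := B2 (L+M-a) (L-(a+b)) (by omega) (by omega) (by omega)
  rw [show L+M-a-(L-(a+b)) = M+b by ring] at h2
  linear_combination (X^((b^2).toNat) * ((1 - X^((M+b).toNat)) * qbz (L+M-a) (L-(a+b)))) * h1
    + (X^((b^2).toNat) * ((1 - X^((L+M+a).toNat)) * qbz (L+M+a-1) (L+(a+b)))) * h2

lemma base (L a b : ℤ) (ha : 0 ≤ a) (hb : 0 ≤ b) (hL : a+b ≤ L) : Ssum L b a b = Rr L b a b := by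
  obtain ⟨nb, rfl⟩ : ∃ n:ℕ, b = (n:ℤ) := ⟨b.toNat, by omega⟩
  rw [Ssum_eq L nb a nb (nb+1) (by omega)]
  rw [Finset.sum_eq_single nb]
  · unfold Fm Bp Rr Bp
    rw [show 2*L+(nb:ℤ)-nb = 2*L by ring, qbz_self (show (0:ℤ) ≤ 2*L by omega),
        show L-(nb:ℤ)+nb+a-nb = L-(nb:ℤ)+a by ring, qbz_self (show (0:ℤ) ≤ L-(nb:ℤ)+a by omega),
        show L-(nb:ℤ)+nb-a+nb = L-a+nb by ring, show L-(nb:ℤ)-a = L-a-nb by ring,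
        show L+(nb:ℤ)+(a+nb)-nb = L+(a+nb) by ring, qbz_self (show (0:ℤ) ≤ L+(a+(nb:ℤ)) by omega),
        show L+(nb:ℤ)-(a+nb)+nb = L-a+nb by ring, show L-(a+(nb:ℤ)) = L-a-nb by ring,
        show (((nb:ℤ))^2).toNat = nb^2 by
          rw [show ((nb:ℤ))^2 = ((nb^2 : ℕ):ℤ) by push_cast; ring, Int.toNat_natCast]]
    ring
  · intro i _ hne
    rcases lt_or_ge i nb with h|h
    · exact Fm_zero_P L nb a nb i (by omega)
    · exact Fm_zero_top L nb a nb i (by omega)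
  · intro habs
    simp at habs

lemma Ssum_zero1 (L M a b : ℤ) (hb : 0 ≤ b) (hL : L < a+b) : Ssum L M a b = 0 := by
  have h : ∀ i:ℕ, Fm L M a b i = 0 := by
    intro i
    rcases lt_or_ge ((i:ℤ)) b with h|h
    · exact Fm_zero_P L M a b i h
    · exact Fm_zero_Q L M a b i (by omega)
  exact (finsum_congr h).trans finsum_zero

lemma Rr_zero1 (L M a b : ℤ) (hL : L < a+b) : Rr L M a b = 0 := by
  unfold Rr Bp
  rw [qbz_eq_zero (show ¬(0 ≤ L-(a+b) ∧ L-(a+b) ≤ L+M-(a+b)+b) by omega)]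
  ring

lemma Ssum_zero2 (L M a b : ℤ) (hM : M < b) : Ssum L M a b = 0 := by
  have h : ∀ i:ℕ, Fm L M a b i = 0 := by
    intro i
    rcases lt_or_ge ((i:ℤ)) b with h|h
    · exact Fm_zero_P L M a b i h
    · exact Fm_zero_top L M a b i (by omega)
  exact (finsum_congr h).trans finsum_zero

lemma Rr_zero2 (L M a b : ℤ) (hM : M < b) : Rr L M a b = 0 := by
  unfold Rr Bp
  rw [qbz_eq_zero (show ¬(0 ≤ L+(a+b) ∧ L+(a+b) ≤ L+M+(a+b)-b) by omega)]
  ring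

lemma mainT (L a b : ℤ) (ha : 0 ≤ a) (hb : 0 ≤ b) (hL : a+b ≤ L) :
    ∀ t : ℕ, Ssum L (b+(t:ℤ)) a b = Rr L (b+(t:ℤ)) a b := by
  intro t
  induction t with
  | zero => simpa using base L a b ha hb hL
  | succ t ih =>
    have hM : b + 1 ≤ b+(t:ℤ)+1 := by omega
    have h1 := step L (b+(t:ℤ)+1) a b ha hb hL hM
    have h2 := Rstep L (b+(t:ℤ)+1) a b ha hb hL hM
    rw [show b+(t:ℤ)+1-1 = b+(t:ℤ) by ring] at h1 h2
    rw [show (b+((t+1:ℕ):ℤ)) = b+(t:ℤ)+1 by push_cast; ring]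
    apply mul_left_cancel₀ (a := (1 - X^((b+(t:ℤ)+1-b).toNat)) * (1 - X^((b+(t:ℤ)+1+b).toNat)))
      (mul_ne_zero (one_sub_X_pow_ne (by omega)) (one_sub_X_pow_ne (by omega)))
    rw [h1, h2, ih]

lemma mainL (L M a b : ℤ) (ha : 0 ≤ a) (hb : 0 ≤ b) : Ssum L M a b = Rr L M a b := by
  rcases lt_or_ge L (a+b) with h|h
  · rw [Ssum_zero1 L M a b hb h, Rr_zero1 L M a b h]
  rcases lt_or_ge M b with h2|h2
  · rw [Ssum_zero2 L M a b h2, Rr_zero2 L M a b h2]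
  · obtain ⟨t, rfl⟩ : ∃ t:ℕ, M = b+(t:ℤ) := ⟨(M-b).toNat, by omega⟩
    exact mainT L a b ha hb h t

theorem stmt17 (L M a b : ℤ) (h : (0 ≤ a ∧ 0 ≤ b) ∨ (a ≤ 0 ∧ b ≤ 0)) :
    (∑ᶠ i : ℕ, X ^ (i ^ 2) * qbz (2 * L + M - i) (2 * L) * Bp (L - i) i a b)
      = X ^ (b ^ 2).toNat * Bp L M (a + b) b := by
  rcases h with ⟨ha, hb⟩ | ⟨ha, hb⟩
  · have := mainL L M a b ha hb
    simp only [Ssum, Rr, Fm] at this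
    exact this
  · have := mainL L M (-a) (-b) (by omega) (by omega)
    simp only [Ssum, Rr, Fm] at this
    have hterm : ∀ i:ℕ, X ^ (i ^ 2) * qbz (2 * L + M - i) (2 * L) * Bp (L - i) i a b
        = X ^ (i ^ 2) * qbz (2 * L + M - i) (2 * L) * Bp (L - i) i (-a) (-b) := by
      intro i
      unfold Bp
      rw [show L-(i:ℤ)+i+(-a)-(-b) = L-(i:ℤ)+i-a+b by ring,
          show L-(i:ℤ)+(-a) = L-(i:ℤ)-a by ring,
          show L-(i:ℤ)+i-(-a)+(-b) = L-(i:ℤ)+i+a-b by ring,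
          show L-(i:ℤ)-(-a) = L-(i:ℤ)+a by ring]
      ring
    rw [finsum_congr hterm, this]
    unfold Bp
    rw [show ((-b)^2 : ℤ) = b^2 by ring,
        show L+M+(-a+-b)-(-b) = L+M-(a+b)+b by ring, show L+(-a+-b) = L-(a+b) by ring,
        show L+M-(-a+-b)+(-b) = L+M+(a+b)-b by ring, show L-(-a+-b) = L+(a+b) by ring]
    ring
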